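/- arXiv:2404.16751 — 2 statements merged into one kernel-verified Lean document; each statement's English description precedes it below -/
import Mathlib

section
/- For any integer partition λ of N whose part sizes below the first row sum to at most k (i.e. |λ*| ≤ k where λ* removes the first row), the dimension of the corresponding irreducible representation of the symmetric group S_N, given by the hook length formula N!/∏_{(i,j)∈λ} h(i,j), is a polynomial function of N of degree |λ*| with all roots at integers in {0, 1, …, 2k−1} of multiplicity at most one, when λ* is held fixed and the first row absorbs the remaining N − |λ*| boxes. -/
/-- The partition `λ(N) = (N − m, μ)`: first row absorbs the remaining `N − m` boxes,
the rows below are given by `μ`. -/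
def lamRow (μ : ℕ → ℕ) (m N : ℕ) : ℕ → ℕ :=
  fun i => if i = 0 then N - m else μ (i - 1)

/-- Column lengths (conjugate partition) of `λ(N)`, rows supported in `{0,…,r}`. -/
def lamCol (μ : ℕ → ℕ) (m N r : ℕ) : ℕ → ℕ :=
  fun j => ((Finset.range (r + 1)).filter (fun i => j < lamRow μ m N i)).card

/-- Hook length of the cell `(i,j)` of `λ(N)`:
`h(i,j) = λᵢ − j + λ'ⱼ − i − 1`. -/
def hookLen (μ : ℕ → ℕ) (m N r i j : ℕ) : ℕ :=
  lamRow μ m N i + lamCol μ m N r j - (i + j + 1)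

/-- The product of all hook lengths of `λ(N)`. -/
def hookProd (μ : ℕ → ℕ) (m N r : ℕ) : ℕ :=
  ∏ i ∈ Finset.range (r + 1), ∏ j ∈ Finset.range (lamRow μ m N i), hookLen μ m N r i j


/-!
Deleting the first row of `λ(N) = (N − m, μ)` leaves `μ`, and every column of `λ(N)` that meets
`μ` is one cell longer than the corresponding column of `μ`; so the rows below the first
contribute exactly the hook product `H(μ)` of `μ`. In the first row, the column `j < μ₀` has hook
length `N − (m + j − μ'ⱼ)`, and the remaining `N − m − μ₀` columns contribute `(N − m − μ₀)!`.
The offsets `m + j − μ'ⱼ` (`j < μ₀`) are strictly increasing and lie below `m + μ₀`, so writing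
`N! = (N − m − μ₀)! · ∏_{t < m + μ₀} (N − t)` gives
`dim S_{λ(N)} = H(μ)⁻¹ · ∏_{t ∈ T} (N − t)`, where `T` is the set of the `m` integers below
`m + μ₀ ≤ 2m` that are not offsets.
-/

open Finset Polynomial
open scoped Nat

theorem Polynomial.eval_prod_X_sub_natCast {R : Type*} [CommRing R] {T : Finset ℕ} {N : ℕ}
    (hT : ∀ t ∈ T, t ≤ N) :
    (∏ t ∈ T, (X - C (t : R))).eval (N : R) = ((∏ t ∈ T, (N - t) : ℕ) : R) := by
  rw [eval_prod, Nat.cast_prod]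
  exact prod_congr rfl fun t ht => by simp [Nat.cast_sub (hT t ht)]

theorem Polynomial.roots_prod_X_sub_natCast {R : Type*} [CommRing R] [IsDomain R]
    (T : Finset ℕ) : (∏ t ∈ T, (X - C (t : R))).roots = T.val.map (↑) := by
  have : ∏ t ∈ T, (X - C (t : R)) = ((T.val.map (↑)).map fun a => X - C a).prod := by
    rw [Multiset.map_map]
    rfl
  rw [this, roots_multiset_prod_X_sub_C]

namespace HookDimension

variable (μ : ℕ → ℕ) (m r : ℕ)

def colLen (j : ℕ) : ℕ := #{i ∈ range r | j < μ i}

def hookProdμ : ℕ :=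
  ∏ i ∈ range r, ∏ j ∈ range (μ i), (μ i + colLen μ r j - (i + j + 1))

/-- The hook length of the first-row cell `(0, j)`, `j < μ₀`, of `λ(N)` is `N - firstRowOffset j`. -/
def firstRowOffset (j : ℕ) : ℕ := m + j - colLen μ r j

def hookRoots : Finset ℕ :=
  range (m + μ 0) \ (range (μ 0)).image (firstRowOffset μ m r)

variable {μ m r}

theorem colLen_antitone : Antitone (colLen μ r) :=
  fun _ _ h => card_le_card fun i hi => by
    simp only [mem_filter] at hi ⊢
    exact ⟨hi.1, h.trans_lt hi.2⟩

theorem colLen_le_sum (j : ℕ) : colLen μ r j ≤ ∑ i ∈ range r, μ i :=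
  calc colLen μ r j = ∑ i ∈ range r with j < μ i, 1 := card_eq_sum_ones _
    _ ≤ ∑ i ∈ range r with j < μ i, μ i := sum_le_sum fun i hi => by
        have := (mem_filter.1 hi).2; omega
    _ ≤ ∑ i ∈ range r, μ i := sum_le_sum_of_subset (filter_subset _ _)

theorem succ_le_colLen (hμ : Antitone μ) {i j : ℕ} (hi : i < r) (hj : j < μ i) :
    i + 1 ≤ colLen μ r j := by
  have : range (i + 1) ⊆ {i ∈ range r | j < μ i} := fun i' hi' => by
    rw [mem_range] at hi'
    exact mem_filter.2 ⟨mem_range.2 (by omega), hj.trans_le (hμ (by omega))⟩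
  simpa [colLen] using card_le_card this

theorem colLen_eq_zero (hμ : Antitone μ) {j : ℕ} (hj : μ 0 ≤ j) : colLen μ r j = 0 :=
  card_eq_zero.2 <| filter_eq_empty_iff.2 fun i _ => by have := hμ (Nat.zero_le i); omega

theorem apply_zero_le_sum_range (hr : ∀ i, r ≤ i → μ i = 0) : μ 0 ≤ ∑ i ∈ range r, μ i := by
  rcases Nat.eq_zero_or_pos r with rfl | h
  · simp [hr 0 le_rfl]
  · exact single_le_sum (fun i _ => Nat.zero_le _) (mem_range.2 h)

theorem hookProdμ_pos (hμ : Antitone μ) : 0 < hookProdμ μ r :=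
  prod_pos fun i hi => prod_pos fun j hj => by
    rw [mem_range] at hi hj
    have := succ_le_colLen hμ hi hj
    omega

theorem lamCol_eq_colLen_add_one {N j : ℕ} (hj : j < N - m) :
    lamCol μ m N r j = colLen μ r j + 1 := by
  rw [lamCol, colLen, card_filter, card_filter, sum_range_succ']
  simp [lamRow, hj]

theorem prod_hookLen_firstRow (hμ : Antitone μ) (hm : ∑ i ∈ range r, μ i = m) {N : ℕ}
    (hN : m + μ 0 ≤ N) :
    ∏ j ∈ range (lamRow μ m N 0), hookLen μ m N r 0 j =
      (∏ j ∈ range (μ 0), (N - firstRowOffset μ m r j)) * (N - m - μ 0)! := by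
  have hrow : lamRow μ m N 0 = μ 0 + (N - m - μ 0) := by simp [lamRow]; omega
  rw [hrow, prod_range_add, ← Nat.descFactorial_self, Nat.descFactorial_eq_prod_range]
  congr 1 <;> refine prod_congr rfl fun j hj => ?_ <;> rw [mem_range] at hj
  · have := colLen_le_sum (μ := μ) (r := r) j
    rw [hookLen, lamCol_eq_colLen_add_one (by omega), firstRowOffset]
    simp only [lamRow, if_pos]
    omega
  · rw [hookLen, lamCol_eq_colLen_add_one (by omega), colLen_eq_zero hμ (by omega)]
    simp only [lamRow, if_pos]
    omega

theorem prod_hookLen_lowerRows (hμ : Antitone μ) {N : ℕ} (hN : m + μ 0 ≤ N) :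
    ∏ i ∈ range r, ∏ j ∈ range (lamRow μ m N (i + 1)), hookLen μ m N r (i + 1) j =
      hookProdμ μ r := by
  refine prod_congr rfl fun i _ => prod_congr rfl fun j hj => ?_
  have hj : j < μ i := by simpa [lamRow] using hj
  have := hμ (Nat.zero_le i)
  rw [hookLen, lamCol_eq_colLen_add_one (by omega)]
  simp only [lamRow, Nat.add_one_ne_zero, if_false, Nat.add_sub_cancel]
  omega

theorem hookProd_eq (hμ : Antitone μ) (hm : ∑ i ∈ range r, μ i = m) {N : ℕ}
    (hN : m + μ 0 ≤ N) :
    hookProd μ m N r = hookProdμ μ r * (N - m - μ 0)! *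
      ∏ j ∈ range (μ 0), (N - firstRowOffset μ m r j) := by
  rw [hookProd, prod_range_succ', prod_hookLen_lowerRows hμ hN, prod_hookLen_firstRow hμ hm hN]
  ring

theorem firstRowOffset_strictMono (hm : ∑ i ∈ range r, μ i = m) :
    StrictMono (firstRowOffset μ m r) :=
  strictMono_nat_of_lt_succ fun j => by
    have := colLen_antitone (μ := μ) (r := r) (Nat.le_add_right j 1)
    have := colLen_le_sum (μ := μ) (r := r) j
    simp only [firstRowOffset]
    omega

theorem image_firstRowOffset_subset :
    (range (μ 0)).image (firstRowOffset μ m r) ⊆ range (m + μ 0) := by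
  simp only [subset_iff, mem_image, mem_range, firstRowOffset]
  rintro _ ⟨j, hj, rfl⟩
  omega

theorem lt_of_mem_hookRoots {t : ℕ} (ht : t ∈ hookRoots μ m r) : t < m + μ 0 :=
  mem_range.1 (mem_sdiff.1 ht).1

theorem card_hookRoots (hm : ∑ i ∈ range r, μ i = m) : #(hookRoots μ m r) = m := by
  rw [hookRoots, card_sdiff_of_subset image_firstRowOffset_subset, card_range,
    card_image_of_injective _ (firstRowOffset_strictMono hm).injective, card_range]
  omega

theorem factorial_mul_hookProdμ (hμ : Antitone μ) (hm : ∑ i ∈ range r, μ i = m) {N : ℕ}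
    (hN : m + μ 0 ≤ N) :
    N ! * hookProdμ μ r = hookProd μ m N r * ∏ t ∈ hookRoots μ m r, (N - t) := by
  rw [← Nat.factorial_mul_descFactorial hN, Nat.descFactorial_eq_prod_range,
    ← prod_sdiff image_firstRowOffset_subset, ← hookRoots,
    prod_image fun _ _ _ _ h => (firstRowOffset_strictMono hm).injective h,
    hookProd_eq hμ hm hN, Nat.sub_sub]
  ring

end HookDimension

open HookDimension

theorem hook_dimension_polynomial_general (μ : ℕ → ℕ) (hμ : Antitone μ) (r m k : ℕ)
    (hr : ∀ i, r ≤ i → μ i = 0) (hm : ∑ i ∈ Finset.range r, μ i = m)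
    (hmk : m ≤ k) :
    ∃ P : Polynomial ℝ, P.natDegree = m ∧
      (∀ N : ℕ, 2 * k ≤ N →
        (N.factorial : ℝ) / (hookProd μ m N r : ℝ) = P.eval (N : ℝ)) ∧
      (∀ x ∈ P.roots, ∃ j : ℕ, j < 2 * k ∧ x = (j : ℝ)) ∧
      P.roots.Nodup := by
  have hμ0 : μ 0 ≤ m := hm ▸ apply_zero_le_sum_range hr
  have hH : (hookProdμ μ r : ℝ) ≠ 0 := Nat.cast_ne_zero.2 (hookProdμ_pos hμ).ne'
  have hroots := roots_prod_X_sub_natCast (R := ℝ) (hookRoots μ m r)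
  refine ⟨C (hookProdμ μ r : ℝ)⁻¹ * ∏ t ∈ hookRoots μ m r, (X - C (t : ℝ)), ?_, ?_, ?_, ?_⟩
  · rw [natDegree_C_mul (inv_ne_zero hH), natDegree_prod_of_monic _ _ fun _ _ => monic_X_sub_C _]
    simp only [natDegree_X_sub_C, sum_const, smul_eq_mul, mul_one, card_hookRoots hm]
  · intro N hN
    have hkey := factorial_mul_hookProdμ hμ hm (N := N) (by omega)
    have hprod : (hookProd μ m N r : ℝ) ≠ 0 := Nat.cast_ne_zero.2 fun h => by
      simp [h, Nat.factorial_ne_zero, (hookProdμ_pos hμ).ne'] at hkey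
    rw [eval_mul, eval_C, eval_prod_X_sub_natCast fun t ht => by
        have := lt_of_mem_hookRoots ht; omega,
      div_eq_iff hprod, inv_mul_eq_div, div_mul_eq_mul_div, eq_div_iff hH]
    exact_mod_cast hkey.trans (mul_comm _ _)
  · rw [roots_C_mul _ (inv_ne_zero hH), hroots]
    simp only [Multiset.mem_map, mem_val]
    rintro _ ⟨t, ht, rfl⟩
    exact ⟨t, by have := lt_of_mem_hookRoots ht; omega, rfl⟩
  · rw [roots_C_mul _ (inv_ne_zero hH), hroots]
    exact (hookRoots μ m r).nodup.map Nat.cast_injective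

/-- Hook length formula polynomiality: fix a partition `μ ⊢ m` with `m ≤ k` and let
`λ(N) = (N − m, μ)`. Then `N ↦ dim S_{λ(N)} = N! / ∏_{(i,j)∈λ(N)} h(i,j)` agrees, for all
`N ≥ 2k`, with a polynomial in `N` of degree `m` whose roots are simple and are integers
in `{0, 1, …, 2k − 1}`. -/
theorem hook_dimension_polynomial (μ : ℕ → ℕ) (hμ : Antitone μ) (r m k : ℕ)
    (hr : ∀ i, r ≤ i → μ i = 0) (hm : ∑ i ∈ Finset.range r, μ i = m)
    (hmk : m ≤ k) (hk : 0 < k) :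
    ∃ P : Polynomial ℝ, P.natDegree = m ∧
      (∀ N : ℕ, 2 * k ≤ N →
        (N.factorial : ℝ) / (hookProd μ m N r : ℝ) = P.eval (N : ℝ)) ∧
      (∀ x ∈ P.roots, ∃ j : ℕ, j < 2 * k ∧ x = (j : ℝ)) ∧
      P.roots.Nodup :=
  hook_dimension_polynomial_general μ hμ r m k hr hm hmk
end

section
/- Let p_m be the Kesten–McKay density p_m(x) = √(4(m−1)/m − x²) / (2π(1 − x²/m)) on |x| ≤ 2√(1 − 1/m) (and 0 elsewhere), for an integer m ≥ 2. Then p_m is a probability density: it is nonnegative on its support and integrates to 1. -/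
/-!
With `a = 2√(1 - 1/M)` and `s = √(a² - x²)`, the function
`G(x) = M/(2π) · arcsin (x/a) - (M-2)/(2π) · arcsin ((M-2) x / (2 √(M-1) √(M-x²)))`
is a primitive of the density on `(-a, a)`: the two terms differentiate to `M / (2π s)`
and `(M-2)² / (2π (M-x²) s)`, and `M (M - x²) - (M-2)² = M s²`. At `x = ±a` both arcsine
arguments are `±1` (for `M ≥ 2`), so `G(±a) = ±(M/4 - (M-2)/4) = ±1/2`.
-/

/-- The Kesten–McKay density with parameter `m`:
`p_m(x) = √(4(m−1)/m − x²) / (2π(1 − x²/m))` for `|x| ≤ 2√(1 − 1/m)`, `0` elsewhere. -/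
noncomputable def kestenMcKay (m : ℕ) (x : ℝ) : ℝ :=
  if |x| ≤ 2 * Real.sqrt (1 - 1 / m) then
    Real.sqrt (4 * ((m:ℝ) - 1) / m - x ^ 2) / (2 * Real.pi * (1 - x ^ 2 / m))
  else 0

open Real MeasureTheory Set intervalIntegral

theorem HasDerivAt.arcsin {f : ℝ → ℝ} {f' x : ℝ} (hf : HasDerivAt f f' x)
    (hx : f x ^ 2 < 1) : HasDerivAt (fun y => arcsin (f y)) (f' / √(1 - f x ^ 2)) x := by
  have h₁ : f x ≠ -1 := by rintro h; rw [h] at hx; norm_num at hx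
  have h₂ : f x ≠ 1 := by rintro h; rw [h] at hx; norm_num at hx
  have := (hasDerivAt_arcsin h₁ h₂).comp x hf
  rwa [one_div_mul_eq_div] at this

namespace KestenMcKay

noncomputable def edge (M : ℝ) : ℝ := 2 * √(1 - 1 / M)

noncomputable def density (M x : ℝ) : ℝ :=
  √(4 * (M - 1) / M - x ^ 2) / (2 * π * (1 - x ^ 2 / M))

noncomputable def correctionArg (M x : ℝ) : ℝ := (M - 2) * x / (2 * √(M - 1) * √(M - x ^ 2))

noncomputable def primitive (M x : ℝ) : ℝ :=
  M / (2 * π) * arcsin (x / edge M) - (M - 2) / (2 * π) * arcsin (correctionArg M x)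

variable {M x : ℝ}

lemma edge_pos (hM : 1 < M) : 0 < edge M := by
  have : 1 / M < 1 := (div_lt_one (by linarith)).2 hM
  unfold edge; positivity

lemma edge_sq (hM : 1 ≤ M) : edge M ^ 2 = 4 * (M - 1) / M := by
  have : 1 / M ≤ 1 := (div_le_one (by linarith)).2 hM
  rw [edge, mul_pow, sq_sqrt (by linarith)]
  field_simp
  ring

lemma edge_sq_le (hM : 1 ≤ M) : edge M ^ 2 ≤ M := by
  rw [edge_sq hM, div_le_iff₀ (by linarith)]
  nlinarith [sq_nonneg (M - 2)]

lemma edge_sq_lt (hM : 1 ≤ M) (h2 : M ≠ 2) : edge M ^ 2 < M := by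
  rw [edge_sq hM, div_lt_iff₀ (by linarith)]
  nlinarith [sq_pos_of_ne_zero (sub_ne_zero.2 h2)]

lemma density_nonneg (hM : 0 < M) (hx : x ^ 2 ≤ M) : 0 ≤ density M x := by
  have : x ^ 2 / M ≤ 1 := (div_le_one hM).2 hx
  have := pi_pos
  exact div_nonneg (sqrt_nonneg _) (by nlinarith)

lemma density_nonneg_of_mem_Icc (hM : 1 ≤ M) (hx : x ∈ Icc (-edge M) (edge M)) :
    0 ≤ density M x :=
  density_nonneg (by linarith) ((sq_le_sq' hx.1 hx.2).trans (edge_sq_le hM))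

lemma hasDerivAt_arcsin_div_edge (hM : 1 < M) (hx : x ^ 2 < edge M ^ 2) :
    HasDerivAt (fun y => arcsin (y / edge M)) (1 / √(4 * (M - 1) / M - x ^ 2)) x := by
  have ha := edge_pos hM
  have hx' : (x / edge M) ^ 2 < 1 := by rwa [div_pow, div_lt_one (by positivity)]
  convert ((hasDerivAt_id' x).div_const (edge M)).arcsin hx' using 1
  rw [← edge_sq hM.le, div_pow, one_sub_div (by positivity), sqrt_div' _ (sq_nonneg _),
    sqrt_sq ha.le]
  field_simp

lemma hasDerivAt_arcsin_correctionArg (hM : 1 < M) (hx : x ^ 2 < 4 * (M - 1) / M) :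
    HasDerivAt (fun y => arcsin (correctionArg M y))
      ((M - 2) / ((M - x ^ 2) * √(4 * (M - 1) / M - x ^ 2))) x := by
  have hMx : x ^ 2 < M := hx.trans_le (edge_sq hM.le ▸ edge_sq_le hM.le)
  unfold correctionArg
  set c := √(M - 1)
  set w := √(M - x ^ 2)
  set s := √(4 * (M - 1) / M - x ^ 2)
  have hc : c ^ 2 = M - 1 := sq_sqrt (by linarith)
  have hw : w ^ 2 = M - x ^ 2 := sq_sqrt (by linarith)
  have hs : s ^ 2 * M = 4 * (M - 1) - x ^ 2 * M := by
    rw [sq_sqrt (by linarith)]; field_simp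
  have hc0 : 0 < c := sqrt_pos.2 (by linarith)
  have hw0 : 0 < w := sqrt_pos.2 (by linarith)
  have hs0 : 0 < s := sqrt_pos.2 (by linarith)
  have hM0 : 0 < M := by linarith
  have hinner : HasDerivAt (fun y => (M - 2) * y / (2 * c * √(M - y ^ 2)))
      ((M - 2) * M / (2 * c * w ^ 3)) x := by
    have hsqrt := ((hasDerivAt_pow 2 x).const_sub M).sqrt (sub_pos.2 hMx).ne'
    refine (((hasDerivAt_id' x).const_mul (M - 2)).div (hsqrt.const_mul (2 * c))
      (by positivity)).congr_deriv ?_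
    rw [show √(M - x ^ 2) = w from rfl]
    field_simp
    norm_num
    linear_combination 2 * (M - 2) * hw
  have hsq : 1 - ((M - 2) * x / (2 * c * w)) ^ 2 = (M * s / (2 * c * w)) ^ 2 := by
    field_simp
    linear_combination 4 * w ^ 2 * hc + 4 * (M - 1) * hw - M * hs
  have hv : ((M - 2) * x / (2 * c * w)) ^ 2 < 1 := by
    have : 0 < (M * s / (2 * c * w)) ^ 2 := by positivity
    linarith
  refine (hinner.arcsin hv).congr_deriv ?_
  rw [hsq, sqrt_sq (by positivity), ← hw]
  field_simp

theorem hasDerivAt_primitive (hM : 1 < M) (hx : x ^ 2 < edge M ^ 2) :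
    HasDerivAt (primitive M) (density M x) x := by
  have hx' : x ^ 2 < 4 * (M - 1) / M := edge_sq hM.le ▸ hx
  have hMx : x ^ 2 < M := hx.trans_le (edge_sq_le hM.le)
  refine (((hasDerivAt_arcsin_div_edge hM hx).const_mul (M / (2 * π))).sub
    ((hasDerivAt_arcsin_correctionArg hM hx').const_mul ((M - 2) / (2 * π)))).congr_deriv ?_
  have hs0 : 0 < √(4 * (M - 1) / M - x ^ 2) := sqrt_pos.2 (by linarith)
  have hs : √(4 * (M - 1) / M - x ^ 2) ^ 2 * M = 4 * (M - 1) - x ^ 2 * M := by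
    rw [sq_sqrt (by linarith)]; field_simp
  have := pi_pos
  have : M - x ^ 2 ≠ 0 := by linarith
  unfold density
  generalize √(4 * (M - 1) / M - x ^ 2) = s at hs0 hs ⊢
  field_simp
  linear_combination -hs

lemma continuousOn_correctionArg (hM : 1 < M) (h2 : M ≠ 2) :
    ContinuousOn (correctionArg M) (Icc (-edge M) (edge M)) := by
  refine ContinuousOn.div (by fun_prop) (by fun_prop) fun y hy => ?_
  have hyM : y ^ 2 < M := (sq_le_sq' hy.1 hy.2).trans_lt (edge_sq_lt hM.le h2)
  have : 0 < √(M - 1) := sqrt_pos.2 (by linarith)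
  have : 0 < √(M - y ^ 2) := sqrt_pos.2 (by linarith)
  positivity

theorem continuousOn_primitive (hM : 1 < M) :
    ContinuousOn (primitive M) (Icc (-edge M) (edge M)) := by
  refine ContinuousOn.sub
    (continuous_const.mul (continuous_arcsin.comp (continuous_id.div_const _))).continuousOn ?_
  rcases eq_or_ne M 2 with rfl | h2
  · simpa using continuousOn_const
  exact continuousOn_const.mul
    (continuous_arcsin.comp_continuousOn (continuousOn_correctionArg hM h2))

lemma primitive_neg (x : ℝ) : primitive M (-x) = -primitive M x := by
  simp only [primitive, correctionArg, neg_sq, neg_div, mul_neg, arcsin_neg]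
  ring

lemma correctionArg_edge (hM : 2 < M) : correctionArg M (edge M) = 1 := by
  have hprod : 4 * (M - 1) * (M - edge M ^ 2) = ((M - 2) * edge M) ^ 2 := by
    rw [mul_pow, edge_sq (by linarith)]
    field_simp
    ring
  have ha := edge_pos (by linarith : 1 < M)
  have hMa : 0 < M - edge M ^ 2 := by linarith [edge_sq_lt (M := M) (by linarith) hM.ne']
  have hden : 2 * √(M - 1) * √(M - edge M ^ 2) = (M - 2) * edge M := by
    refine (sq_eq_sq₀ (by positivity) (by nlinarith)).1 ?_
    rw [mul_pow, mul_pow, sq_sqrt (by linarith), sq_sqrt hMa.le, ← hprod]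
    ring
  rw [correctionArg, hden, div_self (by nlinarith)]

lemma primitive_edge (hM : 2 ≤ M) : primitive M (edge M) = 1 / 2 := by
  have hcorr : (M - 2) * arcsin (correctionArg M (edge M)) = (M - 2) * (π / 2) := by
    rcases hM.eq_or_lt with h2 | h2
    · simp [← h2]
    · rw [correctionArg_edge h2, arcsin_one]
  have := pi_pos
  rw [primitive, div_self (edge_pos (by linarith)).ne', arcsin_one,
    div_mul_eq_mul_div _ _ (arcsin _), hcorr]
  field_simp
  ring

theorem integral_density (hM : 2 ≤ M) : ∫ x in -edge M..edge M, density M x = 1 := by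
  have ha := edge_pos (by linarith : 1 < M)
  have hle : -edge M ≤ edge M := by linarith
  have hderiv : ∀ x ∈ Ioo (-edge M) (edge M), HasDerivAt (primitive M) (density M x) x :=
    fun x hx => hasDerivAt_primitive (by linarith) (sq_lt_sq' hx.1 hx.2)
  have hnonneg : ∀ x ∈ Ioo (-edge M) (edge M), 0 ≤ density M x := fun x hx =>
    density_nonneg_of_mem_Icc (by linarith) (Ioo_subset_Icc_self hx)
  have hcont := continuousOn_primitive (M := M) (by linarith)
  -- for `M = 2` the density blows up at `±a`, so integrability comes from `primitive` instead
  have hint : IntervalIntegrable (density M) volume (-edge M) (edge M) := by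
    apply intervalIntegrable_deriv_of_nonneg (g := primitive M)
    · rwa [uIcc_of_le hle]
    · rwa [min_eq_left hle, max_eq_right hle]
    · rwa [min_eq_left hle, max_eq_right hle]
  rw [integral_eq_sub_of_hasDerivAt_of_le hle hcont hderiv hint, primitive_neg,
    primitive_edge hM]
  norm_num

lemma kestenMcKay_eq_indicator (m : ℕ) :
    kestenMcKay m = (Icc (-edge m) (edge m)).indicator (density m) := by
  ext x
  simp only [kestenMcKay, indicator_apply, mem_Icc, ← abs_le]
  rfl

end KestenMcKay

open KestenMcKay

/-- For `m ≥ 2`, the Kesten–McKay density is a probability density: it is nonnegative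
and integrates to `1`. -/
theorem kestenMcKay_isProbabilityDensity (m : ℕ) (hm : 2 ≤ m) :
    (∀ x, 0 ≤ kestenMcKay m x) ∧ ∫ x : ℝ, kestenMcKay m x = 1 := by
  have hM : (2 : ℝ) ≤ m := by exact_mod_cast hm
  have hle : -edge m ≤ edge m := by linarith [edge_pos (M := m) (by linarith)]
  rw [kestenMcKay_eq_indicator]
  refine ⟨indicator_nonneg fun x hx => density_nonneg_of_mem_Icc (by linarith) hx, ?_⟩
  rw [MeasureTheory.integral_indicator measurableSet_Icc, integral_Icc_eq_integral_Ioc,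
    ← intervalIntegral.integral_of_le hle]
  exact integral_density hM
end
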